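/- Let α, β, A, B be real numbers with (α,β) ≠ (0,0) and (A,B) ≠ (0,0), and let L₁ = {(x,y) ∈ ℝ² : αx + βy = 0} and L₂ = {(x,y) ∈ ℝ² : Ax + By = 0} be lines through the origin. Set ψ = αA + βB, ω = αB − βA, and Δ = (α² + β²)(A² + B²). Then the Douglas–Rachford operator T = (1/2)(I + R_{L₂} R_{L₁}) is the linear map on ℝ² whose standard matrix is (ψ/Δ)·[[ψ, −ω],[ω, ψ]] (a scaled rotation). Consequently ‖T x‖² = (ψ²/Δ)‖x‖² for every x ∈ ℝ², and ψ²/Δ ≤ 1 with equality if and only if L₁ = L₂; in particular the eigenvalues of T have modulus squared equal to ψ²/Δ < 1 whenever the two lines are distinct. -/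

import Mathlib

/-!
Reflections in two lines through the origin compose to the rotation by twice the angle between
them, so `T = ½(I + R₂R₁)` is a rotation followed by a scaling, by `ψ/Δ` in the coordinates of the
normals. Lagrange's identity `ψ² + ω² = Δ` then gives the contraction factor `ψ²/Δ = 1 - ω²/Δ`,
and `ω = 0` says exactly that the two normals are parallel.
-/

def lineThroughOrigin (c d : ℝ) : Submodule ℝ (EuclideanSpace ℝ (Fin 2)) where
  carrier := {p : EuclideanSpace ℝ (Fin 2) | c * p 0 + d * p 1 = 0}
  add_mem' := by
    intro a b ha hb
    simp only [Set.mem_setOf_eq, PiLp.add_apply] at *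
    linarith
  zero_mem' := by simp
  smul_mem' := by
    intro t a ha
    simp only [Set.mem_setOf_eq, PiLp.smul_apply, smul_eq_mul] at *
    linear_combination t * ha

open Submodule

local notation "ℝ²" => EuclideanSpace ℝ (Fin 2)

theorem sq_add_sq_pos_of_prod_ne_zero {a b : ℝ} (h : (a, b) ≠ (0, 0)) : 0 < a ^ 2 + b ^ 2 := by
  obtain ha | hb : a ≠ 0 ∨ b ≠ 0 := not_and_or.mp fun h0 => h (by rw [h0.1, h0.2])
  · positivity
  · positivity

theorem mem_lineThroughOrigin {c d : ℝ} {p : ℝ²} :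
    p ∈ lineThroughOrigin c d ↔ c * p 0 + d * p 1 = 0 := Iff.rfl

theorem lineThroughOrigin_le {c d e f : ℝ} (h : (c, d) ≠ (0, 0)) (hcross : c * f - d * e = 0) :
    lineThroughOrigin c d ≤ lineThroughOrigin e f := by
  intro z hz
  rw [mem_lineThroughOrigin] at *
  obtain hc | hd : c ≠ 0 ∨ d ≠ 0 := not_and_or.mp fun h0 => h (by rw [h0.1, h0.2])
  · refine (mul_eq_zero.mp ?_).resolve_left hc
    linear_combination e * hz + z 1 * hcross
  · refine (mul_eq_zero.mp ?_).resolve_left hd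
    linear_combination f * hz - z 0 * hcross

theorem lineThroughOrigin_eq_iff {c d e f : ℝ} (h₁ : (c, d) ≠ (0, 0)) (h₂ : (e, f) ≠ (0, 0)) :
    lineThroughOrigin c d = lineThroughOrigin e f ↔ c * f - d * e = 0 := by
  refine ⟨fun h => ?_, fun h => le_antisymm (lineThroughOrigin_le h₁ h)
    (lineThroughOrigin_le h₂ (by linear_combination -h))⟩
  have hmem : !₂[d, -c] ∈ lineThroughOrigin c d := by
    rw [mem_lineThroughOrigin]
    simp only [Fin.isValue, Matrix.cons_val_zero, Matrix.cons_val_one, Matrix.cons_val_fin_one]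
    ring
  rw [h, mem_lineThroughOrigin] at hmem
  simp only [Fin.isValue, Matrix.cons_val_zero, Matrix.cons_val_one, Matrix.cons_val_fin_one]
    at hmem
  linear_combination -hmem

theorem starProjection_lineThroughOrigin {c d : ℝ} (h : c ^ 2 + d ^ 2 ≠ 0) (x : ℝ²) :
    (lineThroughOrigin c d).starProjection x =
      !₂[(d ^ 2 * x 0 - c * d * x 1) / (c ^ 2 + d ^ 2),
        (c ^ 2 * x 1 - c * d * x 0) / (c ^ 2 + d ^ 2)] := by
  refine eq_starProjection_of_mem_of_inner_eq_zero ?_ fun w hw => ?_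
  · rw [mem_lineThroughOrigin]
    simp only [Fin.isValue, Matrix.cons_val_zero, Matrix.cons_val_one, Matrix.cons_val_fin_one]
    field_simp
    ring
  · rw [mem_lineThroughOrigin] at hw
    simp only [Fin.isValue, PiLp.inner_apply, PiLp.sub_apply, RCLike.inner_apply,
      Real.ringHom_apply, Fin.sum_univ_two, Matrix.cons_val_zero, Matrix.cons_val_one,
      Matrix.cons_val_fin_one]
    field_simp
    linear_combination (c * x 0 + d * x 1) * hw

theorem reflection_lineThroughOrigin {c d : ℝ} (h : c ^ 2 + d ^ 2 ≠ 0) (x : ℝ²) :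
    (lineThroughOrigin c d).reflection x =
      !₂[((d ^ 2 - c ^ 2) * x 0 - 2 * c * d * x 1) / (c ^ 2 + d ^ 2),
        ((c ^ 2 - d ^ 2) * x 1 - 2 * c * d * x 0) / (c ^ 2 + d ^ 2)] := by
  ext i
  fin_cases i <;>
    simp only [reflection_apply, starProjection_lineThroughOrigin h, Fin.isValue, Fin.zero_eta,
      Fin.mk_one, PiLp.sub_apply, PiLp.smul_apply, Matrix.cons_val_zero, Matrix.cons_val_one,
      Matrix.cons_val_fin_one, nsmul_eq_mul, Nat.cast_ofNat] <;>
    field_simp <;> ring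

theorem douglasRachford_lineThroughOrigin {c d e f : ℝ} (h₁ : c ^ 2 + d ^ 2 ≠ 0)
    (h₂ : e ^ 2 + f ^ 2 ≠ 0) (x : ℝ²) :
    (1 / 2 : ℝ) • (x + (lineThroughOrigin e f).reflection ((lineThroughOrigin c d).reflection x)) =
      ((c * e + d * f) / ((c ^ 2 + d ^ 2) * (e ^ 2 + f ^ 2))) •
        !₂[(c * e + d * f) * x 0 - (c * f - d * e) * x 1,
          (c * f - d * e) * x 0 + (c * e + d * f) * x 1] := by
  ext i
  fin_cases i <;>
    simp only [reflection_lineThroughOrigin h₁, reflection_lineThroughOrigin h₂, Fin.isValue,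
      Fin.zero_eta, Fin.mk_one, PiLp.add_apply, PiLp.smul_apply, smul_eq_mul,
      Matrix.cons_val_zero, Matrix.cons_val_one, Matrix.cons_val_fin_one] <;>
    field_simp <;> ring

theorem norm_sq_scaledRotation_apply (p w : ℝ) (x : ℝ²) :
    ‖!₂[p * x 0 - w * x 1, w * x 0 + p * x 1]‖ ^ 2 = (p ^ 2 + w ^ 2) * ‖x‖ ^ 2 := by
  simp only [EuclideanSpace.norm_sq_eq, Fin.sum_univ_two, Real.norm_eq_abs, sq_abs,
    Matrix.cons_val_zero, Matrix.cons_val_one, Matrix.cons_val_fin_one]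
  ring

/-- For lines `L₁ : αx + βy = 0` and `L₂ : Ax + By = 0` through the origin of
the Euclidean plane (with `(α,β) ≠ 0 ≠ (A,B)`), setting `ψ = αA + βB`, `ω = αB − βA`,
`Δ = (α² + β²)(A² + B²)`, the Douglas–Rachford operator `T = (1/2)(I + R_{L₂} R_{L₁})` is
the linear map with standard matrix `(ψ/Δ)·[[ψ, −ω], [ω, ψ]]`; consequently
`‖T x‖² = (ψ²/Δ)‖x‖²`, and `ψ²/Δ ≤ 1` with equality iff `L₁ = L₂`; in particular
`ψ²/Δ < 1` whenever the lines are distinct. -/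
theorem douglasRachford_two_origin_lines_matrix
    (α β A B : ℝ) (hαβ : (α, β) ≠ (0, 0)) (hAB : (A, B) ≠ (0, 0))
    (ψ ω Δ : ℝ) (hψ : ψ = α * A + β * B) (hω : ω = α * B - β * A)
    (hΔ : Δ = (α ^ 2 + β ^ 2) * (A ^ 2 + B ^ 2))
    (T : EuclideanSpace ℝ (Fin 2) → EuclideanSpace ℝ (Fin 2))
    (hT : ∀ x, T x = (1 / 2 : ℝ) • (x +
      (2 • ((Submodule.orthogonalProjectionOnto (lineThroughOrigin A B)
          (2 • ((Submodule.orthogonalProjectionOnto (lineThroughOrigin α β) x : EuclideanSpace ℝ (Fin 2)))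
            - x) : EuclideanSpace ℝ (Fin 2)))
        - (2 • ((Submodule.orthogonalProjectionOnto (lineThroughOrigin α β) x : EuclideanSpace ℝ (Fin 2)))
            - x)))) :
    (∀ x : EuclideanSpace ℝ (Fin 2),
      T x 0 = ψ / Δ * (ψ * x 0 - ω * x 1) ∧
      T x 1 = ψ / Δ * (ω * x 0 + ψ * x 1)) ∧
    (∀ x : EuclideanSpace ℝ (Fin 2), ‖T x‖ ^ 2 = ψ ^ 2 / Δ * ‖x‖ ^ 2) ∧
    ψ ^ 2 / Δ ≤ 1 ∧
    (ψ ^ 2 / Δ = 1 ↔ lineThroughOrigin α β = lineThroughOrigin A B) ∧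
    (lineThroughOrigin α β ≠ lineThroughOrigin A B → ψ ^ 2 / Δ < 1) := by
  have hαβ' := sq_add_sq_pos_of_prod_ne_zero hαβ
  have hAB' := sq_add_sq_pos_of_prod_ne_zero hAB
  have hΔpos : 0 < Δ := hΔ ▸ mul_pos hαβ' hAB'
  have hLagrange : ψ ^ 2 + ω ^ 2 = Δ := by rw [hψ, hω, hΔ]; ring
  have hratio : ψ ^ 2 / Δ = 1 - ω ^ 2 / Δ := by
    rw [eq_sub_iff_add_eq, ← add_div, hLagrange, div_self hΔpos.ne']
  have hlines : lineThroughOrigin α β = lineThroughOrigin A B ↔ ω = 0 :=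
    hω ▸ lineThroughOrigin_eq_iff hαβ hAB
  -- `hT` is the reflection form up to unfolding, since `reflection_apply` holds by `rfl`.
  have hTx (x : ℝ²) : T x = (ψ / Δ) • !₂[ψ * x 0 - ω * x 1, ω * x 0 + ψ * x 1] := by
    rw [hT x, hψ, hω, hΔ]
    exact douglasRachford_lineThroughOrigin hαβ'.ne' hAB'.ne' x
  refine ⟨fun x => by simp [hTx], fun x => ?_, ?_, ?_, fun hne => ?_⟩
  · rw [hTx, norm_smul, mul_pow, norm_sq_scaledRotation_apply, hLagrange, Real.norm_eq_abs,
      sq_abs]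
    field_simp
  · rw [hratio, sub_le_self_iff]
    positivity
  · rw [hlines, hratio, sub_eq_self, div_eq_zero_iff, or_iff_left hΔpos.ne',
      pow_eq_zero_iff two_ne_zero]
  · have hω0 : ω ≠ 0 := mt hlines.mpr hne
    rw [hratio, sub_lt_self_iff]
    positivity
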